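/- In any algebra satisfying (B1)–(B10), the defined operation ∼x := (x ∨ ¬x) ∧ ∼̇x is antitone: if x ≤ y then ∼y ≤ ∼x. -/

import Mathlib

/-!
By (B5) and (B6), `∼̇` and `¬` are antitone. Distributing, `∼y = (y ∧ ∼̇y) ∨ (¬y ∧ ∼̇y)`;
the second joinand is below `¬x ∧ ∼̇x`, and (B9), read with `x ∨ y = y`, puts the first
below `x ∨ ¬x`.
-/

theorem antitone_of_map_inf {α β : Type*} [Lattice α] [SemilatticeSup β] {f : α → β}
    (h : ∀ x y, f (x ⊓ y) = f x ⊔ f y) : Antitone f := by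
  intro x y hxy
  calc f y ≤ f y ⊔ f x := le_sup_left
    _ = f x := by rw [sup_comm, ← h, inf_eq_left.mpr hxy]

theorem antitone_of_map_sup {α β : Type*} [Lattice α] [SemilatticeInf β] {f : α → β}
    (h : ∀ x y, f (x ⊔ y) = f x ⊓ f y) : Antitone f := by
  intro x y hxy
  calc f y = f x ⊓ f y := by rw [← h, sup_eq_right.mpr hxy]
    _ ≤ f x := inf_le_left

theorem stmt_general {A : Type*} [DistribLattice A]
    (n s : A → A)
    (B5 : ∀ x y : A, s (x ⊓ y) = s x ⊔ s y)
    (B6 : ∀ x y : A, n (x ⊔ y) = n x ⊓ n y)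
    (B9 : ∀ x y : A, (x ⊔ y) ⊓ s (x ⊔ y) ≤ x ⊔ n x)
    (m : A → A) (hm : ∀ x : A, m x = (x ⊔ n x) ⊓ s x) :
    ∀ x y : A, x ≤ y → m y ≤ m x := by
  intro x y hxy
  have hs : s y ≤ s x := antitone_of_map_inf B5 hxy
  have hn : n y ≤ n x := antitone_of_map_sup B6 hxy
  have hy : y ⊓ s y ≤ x ⊔ n x := by simpa only [sup_eq_right.mpr hxy] using B9 x y
  rw [hm x, hm y, inf_sup_right]
  exact sup_le (le_inf hy (inf_le_right.trans hs))
    (inf_le_inf (hn.trans le_sup_right) hs)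

theorem stmt {A : Type*} [DistribLattice A] [BoundedOrder A]
    (n s : A → A)
    (B1 : ∀ x : A, x ⊓ n x = ⊥)
    (B2 : ∀ x : A, x ⊔ s x = ⊤)
    (B3 : ∀ x : A, n x ⊓ s (n x) = ⊥)
    (B4 : ∀ x : A, s x ⊔ n (s x) = ⊤)
    (B5 : ∀ x y : A, s (x ⊓ y) = s x ⊔ s y)
    (B6 : ∀ x y : A, n (x ⊔ y) = n x ⊓ n y)
    (B7 : ∀ x y : A, n (x ⊓ n y) = n x ⊔ n (n y))
    (B8 : ∀ x y : A, s (x ⊔ s y) = s x ⊓ s (s y))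
    (B9 : ∀ x y : A, (x ⊔ y) ⊓ s (x ⊔ y) ≤ x ⊔ n x)
    (B10 : ∀ x y : A, x ⊓ s x ⊓ y ⊓ s y ≤ s (x ⊔ y))
    (m : A → A) (hm : ∀ x : A, m x = (x ⊔ n x) ⊓ s x) :
    ∀ x y : A, x ≤ y → m y ≤ m x :=
  stmt_general n s B5 B6 B9 m hm
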